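/- arXiv:math/0201160 — 2 statements merged into one kernel-verified Lean document; each statement's English description precedes it below -/
import Mathlib

section
/- Let G be a graph and v a vertex of G. Let G⁻ be obtained from the disjoint union of G and a path w–u–t on 3 vertices by adding an edge joining v to the endpoint w. Then f(G⁻) = -f(G). -/
open Finset

/- `f(G) = Σ_C (-1)^{|C|}` over all independent vertex sets `C` of `G`. -/
open Classical in
noncomputable def fgraph {V : Type*} [Fintype V] (G : SimpleGraph V) : ℤ :=
  ∑ s ∈ Finset.univ.filter (fun s : Finset V => ∀ u ∈ s, ∀ v ∈ s, ¬ G.Adj u v),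
    (-1 : ℤ) ^ s.card

/- `f` of the induced subgraph of `G` on the vertex set `A`. -/
open Classical in
noncomputable def fdel {V : Type*} [Fintype V] (G : SimpleGraph V) (A : Set V) : ℤ :=
  fgraph (G.induce A)

/-- The graph obtained from the disjoint union of `G` and `H` by adding an
extra edge joining `v ∈ G` and `w ∈ H`. -/
def glue {V W : Type*} (G : SimpleGraph V) (H : SimpleGraph W) (v : V) (w : W) :
    SimpleGraph (V ⊕ W) :=
  (G ⊕g H) ⊔ SimpleGraph.fromEdgeSet ({s(Sum.inl v, Sum.inr w)} : Set (Sym2 (V ⊕ W)))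

/-!
An independent set of `glue G H v w` is a disjoint sum `A ⊕ B` of independent sets of `G` and `H`
that does not contain both `v` and `w`. Hence
`f(glue G H v w) = f(G) f(H) - f_v(G) f_w(H)`, where `f_v` is the signed count of the independent
sets through `v`. For the path `w – u – t` we have `f = -1` (the empty set, three singletons and
`{w, t}`), while the two independent sets through `w`, `{w}` and `{w, t}`, cancel: `f_w = 0`.
-/

open SimpleGraph

section

variable {V W : Type*}

open Classical in
noncomputable def fgraphContaining [Fintype V] (G : SimpleGraph V) (v : V) : ℤ :=
  ∑ s ∈ univ.filter (fun s : Finset V => (∀ a ∈ s, ∀ b ∈ s, ¬ G.Adj a b) ∧ v ∈ s),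
    (-1 : ℤ) ^ s.card

open Classical in
lemma fgraph_eq_sum_ite [Fintype V] (G : SimpleGraph V) :
    fgraph G = ∑ s : Finset V,
      if ∀ a ∈ s, ∀ b ∈ s, ¬ G.Adj a b then (-1 : ℤ) ^ s.card else 0 :=
  sum_filter _ _

open Classical in
lemma fgraphContaining_eq_sum_ite [Fintype V] (G : SimpleGraph V) (v : V) :
    fgraphContaining G v = ∑ s : Finset V,
      if (∀ a ∈ s, ∀ b ∈ s, ¬ G.Adj a b) ∧ v ∈ s then (-1 : ℤ) ^ s.card else 0 :=
  sum_filter _ _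

lemma glue_adj (G : SimpleGraph V) (H : SimpleGraph W) (v : V) (w : W) (x y : V ⊕ W) :
    (glue G H v w).Adj x y ↔
      (G ⊕g H).Adj x y ∨ (x = .inl v ∧ y = .inr w) ∨ (x = .inr w ∧ y = .inl v) := by
  simp only [glue, sup_adj, fromEdgeSet_adj, Set.mem_singleton_iff, Sym2.eq_iff]
  aesop

lemma glue_indep_disjSum_iff (G : SimpleGraph V) (H : SimpleGraph W) (v : V) (w : W)
    (A : Finset V) (B : Finset W) :
    (∀ a ∈ A.disjSum B, ∀ b ∈ A.disjSum B, ¬ (glue G H v w).Adj a b) ↔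
      (∀ a ∈ A, ∀ b ∈ A, ¬ G.Adj a b) ∧ (∀ a ∈ B, ∀ b ∈ B, ¬ H.Adj a b) ∧
        ¬ (v ∈ A ∧ w ∈ B) := by
  simp only [glue_adj, sum_adj, not_or, not_and, imp_and, forall_and, Sum.forall,
    inl_mem_disjSum, inr_mem_disjSum, reduceCtorEq, not_false_eq_true, implies_true,
    Sum.inr.injEq, true_and, Sum.inl.injEq, and_true, IsEmpty.forall_iff]
  aesop

lemma fgraph_glue [Fintype V] [Fintype W] (G : SimpleGraph V) (H : SimpleGraph W)
    (v : V) (w : W) :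
    fgraph (glue G H v w) =
      fgraph G * fgraph H - fgraphContaining G v * fgraphContaining H w := by
  classical
  rw [fgraph_eq_sum_ite, ← Finset.sumEquiv.symm.toEquiv.sum_comp, Fintype.sum_prod_type,
    fgraph_eq_sum_ite, fgraph_eq_sum_ite, fgraphContaining_eq_sum_ite,
    fgraphContaining_eq_sum_ite, sum_mul_sum, sum_mul_sum, ← sum_sub_distrib]
  refine sum_congr rfl fun A _ => ?_
  rw [← sum_sub_distrib]
  refine sum_congr rfl fun B _ => ?_
  simp only [OrderIso.toEquiv_symm, OrderIso.coe_symm_toEquiv, sumEquiv_symm_apply,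
    glue_indep_disjSum_iff, card_disjSum, pow_add]
  split_ifs <;> simp_all

end

lemma fgraph_pathGraph_three : fgraph (pathGraph 3) = -1 := by
  rw [fgraph_eq_sum_ite]
  simp only [pathGraph_adj]
  decide

lemma fgraphContaining_pathGraph_three_zero : fgraphContaining (pathGraph 3) 0 = 0 := by
  rw [fgraphContaining_eq_sum_ite]
  simp only [pathGraph_adj]
  decide

/-- Attaching a path on three vertices to `G` by an edge from `v` to an endpoint
of the path negates `f`: `f(G⁻) = -f(G)`. -/
theorem minus_construction {V : Type*} [Fintype V] (G : SimpleGraph V) (v : V) :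
    fgraph (glue G (SimpleGraph.pathGraph 3) v 0) = - fgraph G := by
  rw [fgraph_glue, fgraph_pathGraph_three, fgraphContaining_pathGraph_three_zero]
  ring
end

section
/- Let G_1, ..., G_k be graphs with chosen vertices v_i ∈ G_i, where f(G_i) = n_i and f(G_i - v_i) = m_i. Let C be the graph obtained from the disjoint union of G_1, ..., G_k together with extra vertices w, w_1, ..., w_k, by joining w to each w_i and joining each w_i to v_i. Then f(C) = ∏_{i=1}^k (n_i − m_i) − ∏_{i=1}^k n_i and f(C - w) = ∏_{i=1}^k (n_i − m_i). -/
open Finset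

/-- Adjacency within the disjoint union of a family of graphs. -/
def sigmaAdj {ι : Type*} {V : ι → Type*} (G : ∀ i, SimpleGraph (V i)) :
    (Σ i, V i) → (Σ i, V i) → Prop
  | ⟨i, a⟩, ⟨j, b⟩ => ∃ h : j = i, (G i).Adj a (h ▸ b)

/-- The simple building `S(G₁^{v₁}, …, G_k^{v_k})`: the disjoint union of the `G i`
together with a central vertex (`none`) joined to each `v i` by an edge. -/
def simpleBuilding {ι : Type*} {V : ι → Type*} (G : ∀ i, SimpleGraph (V i))
    (v : ∀ i, V i) : SimpleGraph (Option (Σ i, V i)) :=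
  SimpleGraph.fromRel (fun x y => match x, y with
    | some a, some b => sigmaAdj G a b
    | some a, none => a.2 = v a.1
    | none, _ => False)

/-- The complicated building `C(G₁^{v₁}, …, G_k^{v_k})`: the disjoint union of the `G i`
together with a central vertex `w = none` and intermediate vertices `w_i = some (inr i)`,
with edges `w – w_i` and `w_i – v_i`. -/
def complBuilding {ι : Type*} {V : ι → Type*} (G : ∀ i, SimpleGraph (V i))
    (v : ∀ i, V i) : SimpleGraph (Option ((Σ i, V i) ⊕ ι)) :=
  SimpleGraph.fromRel (fun x y => match x, y with
    | some (.inl a), some (.inl b) => sigmaAdj G a b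
    | some (.inl a), some (.inr i) => a.1 = i ∧ a.2 = v a.1
    | some (.inr _), none => True
    | _, _ => False)

/-!
Splitting the independent sets of a graph according to whether they contain a vertex `x`
gives `f(G) = f(G - x) - f(G - N[x])`, and `f` is multiplicative on disjoint unions.
Deleting the centre `w` of the complicated building leaves the disjoint union of the graphs
`G_i` with a pendant vertex `w_i` at `v_i`, each contributing `n_i - m_i` by the recurrence at
`w_i`; deleting the closed neighbourhood of `w` leaves the disjoint union of the `G_i`.
-/

section Invariance
variable {V W : Type*} [Fintype V] [Fintype W]

theorem fgraph_congr {G : SimpleGraph V} {H : SimpleGraph W} (e : G ≃g H) :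
    fgraph G = fgraph H := by
  unfold fgraph
  refine sum_equiv e.toEquiv.finsetCongr (fun s => ?_) (fun s _ => by simp)
  simp only [mem_filter, mem_univ, true_and, Equiv.finsetCongr_apply, forall_mem_map]
  simp [SimpleGraph.Iso.map_adj_iff]

theorem fdel_range {G : SimpleGraph V} {H : SimpleGraph W} (φ : H ↪g G) :
    fdel G (Set.range φ) = fgraph H := by
  classical
  unfold fdel
  convert fgraph_congr φ.isoInduceRange.symm

theorem fdel_image {G : SimpleGraph V} {H : SimpleGraph W} (φ : H ↪g G) (A : Set W) :
    fdel G (φ '' A) = fdel H A := by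
  classical
  have h_range : φ '' A = Set.range (φ.comp (SimpleGraph.Embedding.induce A)) := by
    rw [SimpleGraph.Embedding.coe_comp, Set.range_comp]
    exact congrArg _ Subtype.range_coe.symm
  rw [h_range, fdel_range]
  unfold fdel
  congr!

end Invariance

section Recurrence
variable {V : Type*} [Fintype V]

open Classical in
theorem fdel_eq_sum (G : SimpleGraph V) (A : Set V) :
    fdel G A =
      ∑ s : Finset V with ↑s ⊆ A ∧ ∀ u ∈ s, ∀ w ∈ s, ¬ G.Adj u w, (-1 : ℤ) ^ #s := by
  refine sum_nbij' (fun t => t.map (Function.Embedding.subtype _))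
    (fun s => s.subtype (· ∈ A)) (fun t ht => ?_) (fun s hs => ?_) (fun t _ => ?_)
    (fun s hs => ?_) (fun t _ => by simp)
  · simp only [mem_filter, mem_univ, true_and, coe_map, Function.Embedding.coe_subtype,
      Set.image_subset_iff, forall_mem_map] at ht ⊢
    exact ⟨fun u _ => u.2, ht⟩
  · simp only [mem_filter, mem_univ, true_and, mem_subtype] at hs ⊢
    exact fun u hu w hw => hs.2 u hu w hw
  · ext u; simp
  · simp only [mem_filter, mem_univ, true_and] at hs
    exact subtype_map_of_mem hs.1

theorem fgraph_eq_fdel_sub_fdel (G : SimpleGraph V) (x : V) :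
    fgraph G = fdel G {u | u ≠ x} - fdel G {u | u ≠ x ∧ ¬ G.Adj x u} := by
  classical
  rw [fdel_eq_sum, fdel_eq_sum, sub_eq_add_neg, ← sum_neg_distrib, fgraph,
    ← sum_filter_add_sum_filter_not _ (x ∉ ·), filter_filter, filter_filter]
  congr 1
  · refine sum_congr (filter_congr fun s _ => ?_) fun _ _ => rfl
    simp only [Set.subset_def, mem_coe, Set.mem_ofPred_eq]
    grind
  -- the independent sets containing `x` are the `insert x t`, `t` independent in `G - N[x]`
  · refine sum_nbij' (·.erase x) (insert x) (fun s hs => ?_) (fun t ht => ?_) (fun s hs => ?_)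
      (fun t ht => ?_) (fun s hs => ?_)
    all_goals simp only [mem_filter, mem_univ, true_and, not_not, Set.subset_def, mem_coe,
      Set.mem_ofPred_eq] at *
    · exact ⟨fun u hu => ⟨ne_of_mem_erase hu, hs.1 x hs.2 u (mem_of_mem_erase hu)⟩,
        fun u hu w hw => hs.1 u (mem_of_mem_erase hu) w (mem_of_mem_erase hw)⟩
    · simp only [mem_insert, forall_eq_or_imp, SimpleGraph.irrefl, not_false_eq_true,
        true_or, and_true, true_and]
      exact ⟨fun w hw => (ht.1 w hw).2,
        fun u hu => ⟨fun h => (ht.1 u hu).2 h.symm, ht.2 u hu⟩⟩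
    · exact insert_erase hs.2
    · exact erase_insert fun hx => (ht.1 x hx).1 rfl
    · rw [card_erase_of_mem hs.2, ← neg_one_mul ((-1 : ℤ) ^ _), ← pow_succ',
        Nat.sub_add_cancel (card_pos.2 ⟨x, hs.2⟩)]

end Recurrence

namespace SimpleGraph

section Sigma
variable {ι : Type*} {V : ι → Type*}

def sigma (G : ∀ i, SimpleGraph (V i)) : SimpleGraph (Σ i, V i) where
  Adj := sigmaAdj G
  symm := by
    constructor
    rintro ⟨i, a⟩ ⟨j, b⟩ ⟨rfl, h⟩
    exact ⟨rfl, h.symm⟩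
  loopless := by
    constructor
    rintro ⟨i, a⟩ ⟨_, h⟩
    exact (G i).irrefl h

variable {G : ∀ i, SimpleGraph (V i)}

@[simp]
theorem sigma_adj_mk {i : ι} {a b : V i} : (sigma G).Adj ⟨i, a⟩ ⟨i, b⟩ ↔ (G i).Adj a b :=
  ⟨fun ⟨_, h⟩ => h, fun h => ⟨rfl, h⟩⟩

theorem sigma_adj_of_ne {i j : ι} (h : i ≠ j) (a : V i) (b : V j) :
    ¬ (sigma G).Adj ⟨i, a⟩ ⟨j, b⟩ :=
  fun ⟨hji, _⟩ => h hji.symm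

end Sigma

section Pendant
variable {W : Type*} (G : SimpleGraph W) (v : W)

def withPendant : SimpleGraph (Option W) where
  Adj
    | some a, some b => G.Adj a b
    | some a, none => a = v
    | none, some b => b = v
    | none, none => False
  symm := by
    constructor
    rintro (_ | a) (_ | b) h
    exacts [h, h, h, h.symm]
  loopless := by
    constructor
    rintro (_ | a) h
    exacts [h, G.irrefl h]

@[simp]
theorem withPendant_adj_some_some (a b : W) :
    (G.withPendant v).Adj (some a) (some b) ↔ G.Adj a b :=
  Iff.rfl

@[simp]
theorem withPendant_adj_some_none (a : W) : (G.withPendant v).Adj (some a) none ↔ a = v :=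
  Iff.rfl

@[simp]
theorem withPendant_adj_none_some (b : W) : (G.withPendant v).Adj none (some b) ↔ b = v :=
  Iff.rfl

@[simps]
def embeddingWithPendant : G ↪g G.withPendant v where
  toFun := some
  inj' := Option.some_injective W
  map_rel_iff' := Iff.rfl

end Pendant

end SimpleGraph

theorem fgraph_sigma {ι : Type*} [Fintype ι] {V : ι → Type*} [∀ i, Fintype (V i)]
    (G : ∀ i, SimpleGraph (V i)) : fgraph (SimpleGraph.sigma G) = ∏ i, fgraph (G i) := by
  classical
  unfold fgraph
  rw [prod_univ_sum]
  refine (sum_nbij' (fun g => univ.sigma g)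
    (fun s i => s.preimage (Sigma.mk i) sigma_mk_injective.injOn)
    (fun g hg => ?_) (fun s hs => ?_) (fun g _ => ?_) (fun s _ => ?_) (fun g _ => ?_)).symm
  · simp only [Fintype.mem_piFinset, mem_filter, mem_univ, true_and] at hg ⊢
    rintro ⟨i, a⟩ ha ⟨j, b⟩ hb ⟨rfl, h⟩
    simp only [mem_sigma, mem_univ, true_and] at ha hb
    exact hg _ a ha b hb h
  · simp only [Fintype.mem_piFinset, mem_filter, mem_univ, true_and, mem_preimage] at hs ⊢
    exact fun i a ha b hb h => hs _ ha _ hb (SimpleGraph.sigma_adj_mk.2 h)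
  · funext i; ext a; simp
  · ext ⟨i, a⟩; simp
  · rw [card_sigma, prod_pow_eq_pow_sum]

theorem fgraph_withPendant {W : Type*} [Fintype W] (G : SimpleGraph W) (v : W) :
    fgraph (G.withPendant v) = fgraph G - fdel G {u | u ≠ v} := by
  have h_ne : {u | u ≠ none} = Set.range (G.embeddingWithPendant v) := by
    ext (_ | a) <;> simp
  have h_ne_adj : {u | u ≠ none ∧ ¬ (G.withPendant v).Adj none u} =
      G.embeddingWithPendant v '' {u | u ≠ v} := by
    ext (_ | a) <;> simp
  rw [fgraph_eq_fdel_sub_fdel _ none, h_ne, h_ne_adj, fdel_range, fdel_image]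

def Equiv.sigmaOptionEquivSum {ι : Type*} (V : ι → Type*) :
    (Σ i, Option (V i)) ≃ (Σ i, V i) ⊕ ι where
  toFun x := x.2.elim (.inr x.1) fun a => .inl ⟨x.1, a⟩
  invFun := Sum.elim (fun a => ⟨a.1, some a.2⟩) fun i => ⟨i, none⟩
  left_inv := by rintro ⟨i, _ | a⟩ <;> rfl
  right_inv := by rintro (⟨i, a⟩ | i) <;> rfl

namespace SimpleGraph
variable {ι : Type*} {V : ι → Type*} (G : ∀ i, SimpleGraph (V i)) (v : ∀ i, V i)

@[simp]
theorem complBuilding_adj_inl_inl (a b : Σ i, V i) :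
    (complBuilding G v).Adj (some (.inl a)) (some (.inl b)) ↔ (sigma G).Adj a b := by
  rw [complBuilding, fromRel_adj]
  exact ⟨fun ⟨_, h⟩ => h.elim id (sigma G).adj_symm,
    fun h => ⟨by simpa using h.ne, Or.inl h⟩⟩

@[simp]
theorem complBuilding_adj_inl_inr {i j : ι} (a : V i) :
    (complBuilding G v).Adj (some (.inl ⟨i, a⟩)) (some (.inr j)) ↔ i = j ∧ a = v i := by
  simp [complBuilding]

@[simp]
theorem complBuilding_adj_inr_inl {i j : ι} (a : V i) :
    (complBuilding G v).Adj (some (.inr j)) (some (.inl ⟨i, a⟩)) ↔ i = j ∧ a = v i := by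
  simp [complBuilding]

@[simp]
theorem complBuilding_adj_inr_inr (i j : ι) :
    ¬ (complBuilding G v).Adj (some (.inr i)) (some (.inr j)) := by
  simp [complBuilding]

@[simp]
theorem complBuilding_adj_none_inl (a : Σ i, V i) :
    ¬ (complBuilding G v).Adj none (some (.inl a)) := by
  simp [complBuilding]

@[simp]
theorem complBuilding_adj_none_inr (i : ι) : (complBuilding G v).Adj none (some (.inr i)) := by
  simp [complBuilding]

@[simps]
def sigmaEmbeddingComplBuilding : sigma G ↪g complBuilding G v where
  toFun a := some (.inl a)
  inj' _ _ h := by simpa using h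
  map_rel_iff' := complBuilding_adj_inl_inl G v _ _

@[simps]
def pendantsEmbeddingComplBuilding :
    sigma (fun i => (G i).withPendant (v i)) ↪g complBuilding G v where
  toFun x := some (Equiv.sigmaOptionEquivSum V x)
  inj' := (Option.some_injective _).comp (Equiv.sigmaOptionEquivSum V).injective
  map_rel_iff' := by
    rintro ⟨i, _ | a⟩ ⟨j, _ | b⟩ <;> rcases eq_or_ne i j with rfl | hij <;>
      simp_all [Equiv.sigmaOptionEquivSum, sigma_adj_of_ne, eq_comm]

theorem range_sigmaEmbeddingComplBuilding :
    Set.range (sigmaEmbeddingComplBuilding G v) =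
      {x | x ≠ none ∧ ¬ (complBuilding G v).Adj none x} := by
  ext (_ | a | i) <;> simp

theorem range_pendantsEmbeddingComplBuilding :
    Set.range (pendantsEmbeddingComplBuilding G v) = {x | x ≠ none} := by
  ext (_ | x)
  · simp
  · simpa using (Equiv.sigmaOptionEquivSum V).surjective x

end SimpleGraph

section Building
variable {ι : Type*} [Fintype ι] {V : ι → Type*} [∀ i, Fintype (V i)]
  (G : ∀ i, SimpleGraph (V i)) (v : ∀ i, V i)

theorem fdel_complBuilding_ne_none :
    fdel (complBuilding G v) {x | x ≠ none} =
      ∏ i, (fgraph (G i) - fdel (G i) {u | u ≠ v i}) := by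
  rw [← SimpleGraph.range_pendantsEmbeddingComplBuilding, fdel_range, fgraph_sigma]
  simp only [fgraph_withPendant]

theorem fgraph_complBuilding :
    fgraph (complBuilding G v) =
      ∏ i, (fgraph (G i) - fdel (G i) {u | u ≠ v i}) - ∏ i, fgraph (G i) := by
  rw [fgraph_eq_fdel_sub_fdel _ none, fdel_complBuilding_ne_none,
    ← SimpleGraph.range_sigmaEmbeddingComplBuilding, fdel_range, fgraph_sigma]

end Building

open Classical in
theorem complBuilding_f {ι : Type*} [Fintype ι] {V : ι → Type*} [∀ i, Fintype (V i)]
    (G : ∀ i, SimpleGraph (V i)) (v : ∀ i, V i) (n m : ι → ℤ)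
    (hn : ∀ i, fgraph (G i) = n i) (hm : ∀ i, fdel (G i) {u | u ≠ v i} = m i) :
    fgraph (complBuilding G v) = (∏ i, (n i - m i)) - ∏ i, n i ∧
    fdel (complBuilding G v) {x | x ≠ none} = ∏ i, (n i - m i) := by
  simp only [fgraph_complBuilding, fdel_complBuilding_ne_none, hn, hm, and_self]
end
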